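/- For the QP in ℓ² with f(x) = (1/2)(−x₂² + x₃² + x₄² + …) + x₁ and constraint (1/2)‖x‖² ≤ 1/2, the objective quadratic form is a Legendre form, the feasible set is the closed unit ball, the infimum of f over the feasible set is −1, and the unique global minimizer is (−1, 0, 0, …). -/
import Mathlib


noncomputable section
open Filter Topology RealInnerProductSpace
open ENNReal

/-- weak convergence of a sequence in a Hilbert space -/
def WeakConv {H : Type*} [NormedAddCommGroup H] [InnerProductSpace ℝ H]
    (x : ℕ → H) (x₀ : H) : Prop :=
  ∀ y : H, Tendsto (fun k => ⟪x k, y⟫) atTop (𝓝 ⟪x₀, y⟫)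

/-- weak lower semicontinuity: lower semicontinuity for the weak topology -/
def WeaklyLSC {H : Type*} [NormedAddCommGroup H] [InnerProductSpace ℝ H]
    (Q : H → ℝ) : Prop :=
  LowerSemicontinuous fun x : WeakSpace ℝ H => Q ((toWeakSpace ℝ H).symm x)

/-- `Q` is a Legendre form. -/
def IsLegendreForm {H : Type*} [NormedAddCommGroup H] [InnerProductSpace ℝ H]
    (Q : H → ℝ) : Prop :=
  WeaklyLSC Q ∧ ∀ (x : ℕ → H) (x₀ : H), WeakConv x x₀ →
    Tendsto (fun k => Q (x k)) atTop (𝓝 (Q x₀)) → Tendsto x atTop (𝓝 x₀)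

/-- `ℓ²` of square-summable real sequences -/
abbrev ell2 : Type := lp (fun _ : ℕ => ℝ) 2

/-- the coefficients of the quadratic form `⟪x, T x⟫` with `Tx = (0, −x₂, x₃, x₄, …)`
(indices shifted so that the paper's `x₁` is coordinate `0`) -/
def sigma19 : ℕ → ℝ := fun n => if n = 0 then 0 else if n = 1 then -1 else 1

lemma ell2_summable_sq (x : ell2) : Summable fun n => (x n)^2 := by
  have h := (lp.memℓp x).summable (by norm_num : 0 < (2:ℝ≥0∞).toReal)
  have : ∀ n, ‖x n‖ ^ (2:ℝ≥0∞).toReal = (x n)^2 := by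
    intro n
    rw [show (2:ℝ≥0∞).toReal = ((2:ℕ):ℝ) by norm_num, Real.rpow_natCast,
      Real.norm_eq_abs, sq_abs]
  simpa [this] using h

lemma ell2_norm_sq (x : ell2) : ‖x‖^2 = ∑' n, (x n)^2 := by
  rw [← real_inner_self_eq_norm_sq, lp.inner_eq_tsum]
  congr 1; ext n; simp [RCLike.inner_apply, sq]

lemma ell2_inner_single (x : ell2) (n : ℕ) : ⟪x, lp.single 2 n (1:ℝ)⟫ = x n := by
  rw [lp.inner_single_right]; simp [RCLike.inner_apply]

lemma Q_eq (x : ell2) :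
    (∑' n, sigma19 n * (x n)^2) = ‖x‖^2 - (x 0)^2 - 2*(x 1)^2 := by
  have hS := ell2_summable_sq x
  have h0 : Summable fun n : ℕ => (if n = 0 then (x 0)^2 else 0) :=
    (hasSum_ite_eq 0 ((x 0)^2)).summable
  have h1 : Summable fun n : ℕ => (if n = 1 then 2*(x 1)^2 else 0) :=
    (hasSum_ite_eq 1 (2*(x 1)^2)).summable
  have key : (fun n => sigma19 n * (x n)^2) =
      fun n => ((x n)^2 - (if n = 0 then (x 0)^2 else 0)) - (if n = 1 then 2*(x 1)^2 else 0) := by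
    funext n
    rcases n with _ | n
    · simp [sigma19]
    rcases n with _ | n
    · simp [sigma19]; ring
    · simp [sigma19]
  rw [key, Summable.tsum_sub (hS.sub h0) h1, Summable.tsum_sub hS h0, tsum_ite_eq, tsum_ite_eq, ell2_norm_sq]

lemma weak_coord_continuous (n : ℕ) :
    Continuous fun x : WeakSpace ℝ ell2 => ((toWeakSpace ℝ ell2).symm x) n := by
  have h1 : Continuous fun x : WeakSpace ℝ ell2 =>
      ((topDualPairing ℝ ell2).flip x) (innerSL ℝ (lp.single 2 n (1:ℝ))) :=
    WeakBilin.eval_continuous _ _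
  convert h1 using 1
  funext x
  show ((toWeakSpace ℝ ell2).symm x) n = ⟪lp.single 2 n (1:ℝ), (toWeakSpace ℝ ell2).symm x⟫
  rw [lp.inner_single_left]
  simp [RCLike.inner_apply]

lemma isClosed_weak_ball (r : ℝ) :
    IsClosed {x : WeakSpace ℝ ell2 | ‖(toWeakSpace ℝ ell2).symm x‖ ≤ r} := by
  have hconv : Convex ℝ (Metric.closedBall (0:ell2) r) := convex_closedBall 0 r
  have h := hconv.toWeakSpace_closure (𝕜 := ℝ)
  rw [Metric.isClosed_closedBall.closure_eq] at h
  have himg : (toWeakSpace ℝ ell2) '' (Metric.closedBall (0:ell2) r) =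
      {x : WeakSpace ℝ ell2 | ‖(toWeakSpace ℝ ell2).symm x‖ ≤ r} := by
    ext y
    constructor
    · rintro ⟨a, ha, rfl⟩
      simp only [Set.mem_setOf_eq, LinearEquiv.symm_apply_apply]
      simpa [dist_zero_right] using ha
    · intro hy
      exact ⟨(toWeakSpace ℝ ell2).symm y,
        by simpa [Metric.mem_closedBall, dist_zero_right] using hy, by simp⟩
  rw [himg] at h
  rw [h]
  exact isClosed_closure

lemma lsc_weak_normsq :
    LowerSemicontinuous fun x : WeakSpace ℝ ell2 => ‖(toWeakSpace ℝ ell2).symm x‖^2 := by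
  rw [lowerSemicontinuous_iff_isClosed_preimage]
  intro c
  rcases le_or_gt 0 c with hc | hc
  · have : (fun x : WeakSpace ℝ ell2 => ‖(toWeakSpace ℝ ell2).symm x‖^2) ⁻¹' Set.Iic c =
        {x : WeakSpace ℝ ell2 | ‖(toWeakSpace ℝ ell2).symm x‖ ≤ Real.sqrt c} := by
      ext x
      simp only [Set.mem_preimage, Set.mem_Iic, Set.mem_setOf_eq]
      exact (Real.le_sqrt (norm_nonneg _) hc).symm
    rw [this]; exact isClosed_weak_ball _
  · convert isClosed_empty
    ext x
    simp only [Set.mem_preimage, Set.mem_Iic, Set.mem_empty_iff_false, iff_false, not_le]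
    exact lt_of_lt_of_le hc (sq_nonneg _)

lemma legendre19 : IsLegendreForm (fun x : ell2 => ∑' n, sigma19 n * (x n)^2) := by
  constructor
  · unfold WeaklyLSC
    have hfun : (fun x : WeakSpace ℝ ell2 =>
        (fun x : ell2 => ∑' n, sigma19 n * (x n)^2) ((toWeakSpace ℝ ell2).symm x))
        = fun x => ‖(toWeakSpace ℝ ell2).symm x‖^2 +
            (-(((toWeakSpace ℝ ell2).symm x) 0)^2 - 2*(((toWeakSpace ℝ ell2).symm x) 1)^2) := by
      funext x; simp only; rw [Q_eq]; ring
    rw [hfun]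
    have hcont : Continuous fun x : WeakSpace ℝ ell2 =>
        (-(((toWeakSpace ℝ ell2).symm x) 0)^2 - 2*(((toWeakSpace ℝ ell2).symm x) 1)^2) :=
      (((weak_coord_continuous 0).pow 2).neg).sub (continuous_const.mul ((weak_coord_continuous 1).pow 2))
    exact lsc_weak_normsq.add hcont.lowerSemicontinuous
  · intro x x₀ hw hQt
    have hc0 : Tendsto (fun k => (x k) 0) atTop (𝓝 (x₀ 0)) := by
      have := hw (lp.single 2 0 1); simpa [ell2_inner_single] using this
    have hc1 : Tendsto (fun k => (x k) 1) atTop (𝓝 (x₀ 1)) := by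
      have := hw (lp.single 2 1 1); simpa [ell2_inner_single] using this
    have hn2 : Tendsto (fun k => ‖x k‖^2) atTop (𝓝 (‖x₀‖^2)) := by
      have h := hQt.add ((hc0.pow 2).add ((hc1.pow 2).const_mul 2))
      have he : (fun k => (∑' n, sigma19 n * ((x k) n)^2) + ((x k 0)^2 + 2*(x k 1)^2))
          = fun k => ‖x k‖^2 := by
        funext k; rw [Q_eq]; ring
      rw [he] at h
      have he2 : (∑' n, sigma19 n * (x₀ n)^2) + ((x₀ 0)^2 + 2*(x₀ 1)^2) = ‖x₀‖^2 := by
        rw [Q_eq]; ring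
      rwa [he2] at h
    have hip : Tendsto (fun k => ⟪x k, x₀⟫) atTop (𝓝 (‖x₀‖^2)) := by
      simpa [real_inner_self_eq_norm_sq] using hw x₀
    have hdiff : Tendsto (fun k => ‖x k - x₀‖^2) atTop (𝓝 0) := by
      have h := (hn2.sub (hip.const_mul 2)).add (tendsto_const_nhds (x := ‖x₀‖^2))
      have he : (fun k => (‖x k‖^2 - 2*⟪x k, x₀⟫) + ‖x₀‖^2) = fun k => ‖x k - x₀‖^2 := by
        funext k; rw [norm_sub_sq_real]
      rw [he] at h
      have : ‖x₀‖^2 - 2*‖x₀‖^2 + ‖x₀‖^2 = 0 := by ring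
      rwa [this] at h
    rw [tendsto_iff_norm_sub_tendsto_zero]
    have h := (Real.continuous_sqrt.tendsto 0).comp hdiff
    simpa [Real.sqrt_sq, norm_nonneg, Function.comp_def] using h

/-- For the QP in `ℓ²` with
`f(x) = (1/2)(−x₂² + x₃² + x₄² + …) + x₁` and constraint `(1/2)‖x‖² ≤ 1/2`:
the objective quadratic form is a Legendre form, the feasible set is the closed unit
ball, the infimum of `f` over the feasible set is `−1`, and the unique global minimizer
is `(−1, 0, 0, …)`. -/
theorem stmt19
    (Q : ell2 → ℝ) (hQ : Q = fun x => ∑' n : ℕ, sigma19 n * (x n) ^ 2)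
    (f : ell2 → ℝ) (hf : f = fun x => (1 / 2) * Q x + x 0)
    (F : Set ell2) (hF : F = {x : ell2 | (1 / 2) * ‖x‖ ^ 2 ≤ 1 / 2})
    (xbar : ell2) (hxbar : xbar = lp.single 2 (0 : ℕ) (-1 : ℝ)) :
    IsLegendreForm Q ∧
    F = Metric.closedBall (0 : ell2) 1 ∧
    xbar ∈ F ∧ f xbar = -1 ∧
    (∀ x ∈ F, -1 ≤ f x) ∧
    (∀ x ∈ F, f x = -1 → x = xbar) := by
  subst hQ hf hF hxbar
  have hxbar_coord : ∀ n : ℕ, (lp.single 2 (0:ℕ) (-1:ℝ) : ell2) n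
      = if n = 0 then (-1:ℝ) else 0 := by
    intro n
    rcases eq_or_ne n 0 with rfl | hn
    · simp [lp.single_apply_self]
    · simp [lp.single_apply_ne _ _ _ hn, hn]
  have hxnorm : ‖(lp.single 2 (0:ℕ) (-1:ℝ) : ell2)‖^2 = 1 := by
    rw [ell2_norm_sq]
    have : (fun n => ((lp.single 2 (0:ℕ) (-1:ℝ) : ell2) n)^2)
        = fun n => if n = 0 then (1:ℝ) else 0 := by
      funext n
      rw [hxbar_coord]
      rcases eq_or_ne n 0 with rfl | hn
      · norm_num
      · simp [hn]
    rw [this, tsum_ite_eq]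
  -- key coordinate bound
  have hkey : ∀ (x : ell2) (m : ℕ), m ≠ 0 → (x 0)^2 + (x m)^2 ≤ ‖x‖^2 := by
    intro x m hm
    rw [ell2_norm_sq]
    have := Summable.sum_le_tsum ({0, m} : Finset ℕ)
      (fun i _ => sq_nonneg (x i)) (ell2_summable_sq x)
    rwa [Finset.sum_pair (Ne.symm hm)] at this
  have hFmem : ∀ x : ell2, x ∈ {x : ell2 | (1 / 2) * ‖x‖ ^ 2 ≤ 1 / 2} ↔ ‖x‖^2 ≤ 1 := by
    intro x; simp only [Set.mem_setOf_eq]; constructor <;> intro h <;> linarith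
  refine ⟨legendre19, ?_, ?_, ?_, ?_, ?_⟩
  · ext x
    rw [hFmem, Metric.mem_closedBall, dist_zero_right,
      ← pow_le_one_iff_of_nonneg (norm_nonneg x) (two_ne_zero)]
  · rw [hFmem, hxnorm]
  · simp only
    rw [Q_eq, hxnorm, hxbar_coord 0, hxbar_coord 1]
    norm_num
  · intro x hx
    rw [hFmem] at hx
    have hk := hkey x 1 one_ne_zero
    simp only
    rw [Q_eq]
    nlinarith [sq_nonneg (x 0 + 1)]
  · intro x hx hfx
    rw [hFmem] at hx
    have hk := hkey x 1 one_ne_zero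
    simp only at hfx
    rw [Q_eq] at hfx
    have ha2 : (x 0 + 1)^2 ≤ 0 := by nlinarith
    have ha : x 0 = -1 := by nlinarith [sq_nonneg (x 0 + 1)]
    have hb : x 1 = 0 := by nlinarith [sq_nonneg (x 1)]
    have hN : ‖x‖^2 = 1 := by rw [ha, hb] at hfx; nlinarith
    apply lp.ext
    funext m
    rw [show ((lp.single 2 (0:ℕ) (-1:ℝ) : ell2) : ∀ _ : ℕ, ℝ) m = if m = 0 then (-1:ℝ) else 0
      from hxbar_coord m]
    rcases eq_or_ne m 0 with rfl | hm
    · simpa using ha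
    · rw [if_neg hm]
      have hb2 := hkey x m hm
      rw [hN, ha] at hb2
      have h2 : (x m)^2 ≤ 0 := by nlinarith
      exact (pow_eq_zero_iff two_ne_zero).mp (le_antisymm h2 (sq_nonneg _))
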